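/- arXiv:2206.04475 — 5 statements merged into one kernel-verified Lean document; each statement's English description precedes it below -/
import Mathlib

section
/- For every k ≥ 1, C ≥ 1, every pair of policies π, π' over H, every x̄ ∈ X^k, ȳ ∈ {0,1}^k, and ρ = (ρ^1,ρ^2) ∈ X², letting ℓ ∈ [0,1]^{2k+4C} and a^h ∈ {0,1}^{2k+4C} be the loss and action vectors produced by the reduction with parameters (x̄,ȳ,ρ,C), one has L_{C,ρ}(π,x̄,ȳ) − L_{C,ρ}(π',x̄,ȳ) = 2·( E_{h∼π}⟨a^h, ℓ⟩ − E_{h∼π'}⟨a^h, ℓ⟩ ). -/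
open Finset

variable {X H : Type*}

/-- `π(x) = Pr_{h∼π}[h(x) = 1]`, where the hypothesis class is given by `f : H → X → Bool`. -/
noncomputable def polVal [Fintype H] (f : H → X → Bool) (π : H → ℝ) (x : X) : ℝ :=
  ∑ h, π h * (if f h x then 1 else 0)

/-- Misclassification loss `Error(π, x̄, ȳ) = Σ_i Pr_{h∼π}[h(x̄^i) ≠ ȳ^i]`. -/
noncomputable def errLoss [Fintype H] (f : H → X → Bool) (π : H → ℝ) {k : ℕ}
    (xb : Fin k → X) (yb : Fin k → Bool) : ℝ :=
  ∑ i, ∑ h, π h * (if f h (xb i) = yb i then 0 else 1)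

/-- Lagrangian loss `L_{C,ρ}(π, x̄, ȳ) = Error(π,x̄,ȳ) + C·(π(ρ^1) − π(ρ^2))`. -/
noncomputable def lagLoss [Fintype H] (f : H → X → Bool) (C : ℕ) (ρ : X × X) (π : H → ℝ)
    {k : ℕ} (xb : Fin k → X) (yb : Fin k → Bool) : ℝ :=
  errLoss f π xb yb + C * (polVal f π ρ.1 - polVal f π ρ.2)

/-- Augmented contexts `x̄̄ = (x̄^1,…,x̄^k, ρ^1,…,ρ^1, ρ^2,…,ρ^2)` (each `ρ^j` repeated `C` times). -/
def augX (C : ℕ) {k : ℕ} (xb : Fin k → X) (ρ : X × X) : Fin (k + 2*C) → X := fun i =>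
  if h : (i : ℕ) < k then xb ⟨i, h⟩ else if (i : ℕ) < k + C then ρ.1 else ρ.2

/-- Augmented labels `ȳ̄ = (ȳ^1,…,ȳ^k, 0,…,0, 1,…,1)` (`C` zeros then `C` ones). -/
def augY (C : ℕ) {k : ℕ} (yb : Fin k → Bool) : Fin (k + 2*C) → Bool := fun i =>
  if h : (i : ℕ) < k then yb ⟨i, h⟩ else if (i : ℕ) < k + C then false else true

/-- Loss vector of the reduction: `ℓ = (1−ȳ̄^1,…,1−ȳ̄^{k+2C}, 1/2,…,1/2) ∈ [0,1]^{2k+4C}`. -/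
noncomputable def lossVec (C : ℕ) {k : ℕ} (yb : Fin k → Bool) :
    Fin (k + 2*C) ⊕ Fin (k + 2*C) → ℝ :=
  Sum.elim (fun i => 1 - (if augY C yb i then (1:ℝ) else 0)) (fun _ => 1/2)

/-- Action vector of the reduction:
`a^h = (h(x̄̄^1),…,h(x̄̄^{k+2C}), 1−h(x̄̄^1),…,1−h(x̄̄^{k+2C})) ∈ {0,1}^{2k+4C}`. -/
def actVec (f : H → X → Bool) (C : ℕ) {k : ℕ} (xb : Fin k → X) (ρ : X × X) (h : H) :
    Fin (k + 2*C) ⊕ Fin (k + 2*C) → ℝ :=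
  Sum.elim (fun i => if f h (augX C xb ρ i) then 1 else 0)
    (fun i => 1 - (if f h (augX C xb ρ i) then (1:ℝ) else 0))

/-- Expected linear semi-bandit loss `E_{h∼π} ⟨a^h, ℓ⟩` of the reduction. -/
noncomputable def expLin [Fintype H] (f : H → X → Bool) (C : ℕ) {k : ℕ}
    (xb : Fin k → X) (yb : Fin k → Bool) (ρ : X × X) (π : H → ℝ) : ℝ :=
  ∑ h, π h * ∑ j, actVec f C xb ρ h j * lossVec C yb j

/-- the difference of Lagrangian losses of two policies equals twice the
difference of their expected linear semi-bandit losses under the reduction. -/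
theorem statement2 [Fintype H] (f : H → X → Bool) {k C : ℕ} (hk : 1 ≤ k) (hC : 1 ≤ C)
    (π π' : H → ℝ) (hπ0 : ∀ h, 0 ≤ π h) (hπ1 : ∑ h, π h = 1)
    (hπ'0 : ∀ h, 0 ≤ π' h) (hπ'1 : ∑ h, π' h = 1)
    (xb : Fin k → X) (yb : Fin k → Bool) (ρ : X × X) :
    lagLoss f C ρ π xb yb - lagLoss f C ρ π' xb yb =
      2 * (expLin f C xb yb ρ π - expLin f C xb yb ρ π') := by
  classical
  set E : H → ℝ := fun h => ∑ i : Fin (k+2*C),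
      (if f h (augX C xb ρ i) = augY C yb i then (0:ℝ) else 1) with hE
  set c : ℝ := ∑ i : Fin (k+2*C), (1 - (if augY C yb i then (1:ℝ) else 0))/2 with hc
  have key : ∀ h : H, (∑ j, actVec f C xb ρ h j * lossVec C yb j) = c + (1/2) * E h := by
    intro h
    rw [hE, hc, Fintype.sum_sum_type]
    simp only [actVec, lossVec, Sum.elim_inl, Sum.elim_inr]
    rw [Finset.mul_sum, ← Finset.sum_add_distrib, ← Finset.sum_add_distrib]
    refine Finset.sum_congr rfl fun i _ => ?_
    cases hfi : f h (augX C xb ρ i) <;> cases hyi : augY C yb i <;>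
      simp [hfi, hyi] <;> norm_num
  have errSum : ∀ h : H, E h =
      (∑ i : Fin k, (if f h (xb i) = yb i then (0:ℝ) else 1))
      + C * (if f h ρ.1 then (1:ℝ) else 0)
      + C * (1 - (if f h ρ.2 then (1:ℝ) else 0)) := by
    intro h
    set G : ℕ → ℝ := fun m =>
      if hm : m < k then (if f h (xb ⟨m, hm⟩) = yb ⟨m, hm⟩ then (0:ℝ) else 1)
      else if m < k + C then (if f h ρ.1 then (1:ℝ) else 0)
      else (1 - (if f h ρ.2 then (1:ℝ) else 0)) with hG
    have e1 : E h = ∑ m ∈ Finset.range (k+2*C), G m := by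
      rw [hE, ← Fin.sum_univ_eq_sum_range]
      refine Finset.sum_congr rfl fun i _ => ?_
      by_cases h1 : (i:ℕ) < k
      · simp [hG, augX, augY, h1]
      · by_cases h2 : (i:ℕ) < k + C <;>
          simp [hG, augX, augY, h1, h2] <;> cases f h ρ.1 <;> cases f h ρ.2 <;> simp
    have hsplit : ∑ m ∈ Finset.range (k+2*C), G m
        = (∑ m ∈ Finset.Ico 0 k, G m) + (∑ m ∈ Finset.Ico k (k+C), G m)
          + (∑ m ∈ Finset.Ico (k+C) (k+2*C), G m) := by
      rw [Finset.range_eq_Ico,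
        ← Finset.sum_Ico_consecutive G (Nat.zero_le k) (by omega : k ≤ k+2*C),
        ← Finset.sum_Ico_consecutive G (by omega : k ≤ k+C) (by omega : k+C ≤ k+2*C)]
      ring
    have s1 : ∑ m ∈ Finset.Ico 0 k, G m
        = ∑ i : Fin k, (if f h (xb i) = yb i then (0:ℝ) else 1) := by
      rw [← Finset.range_eq_Ico, ← Fin.sum_univ_eq_sum_range]
      refine Finset.sum_congr rfl fun i _ => ?_
      simp [hG, i.isLt]
    have s2 : ∑ m ∈ Finset.Ico k (k+C), G m = C * (if f h ρ.1 then (1:ℝ) else 0) := by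
      have hcon : ∀ m ∈ Finset.Ico k (k+C), G m = (if f h ρ.1 then (1:ℝ) else 0) := by
        intro m hm
        rw [Finset.mem_Ico] at hm
        simp only [hG]
        rw [dif_neg (by omega : ¬ m < k), if_pos hm.2]
      rw [Finset.sum_congr rfl hcon, Finset.sum_const, Nat.card_Ico,
        (by omega : k + C - k = C), nsmul_eq_mul]
    have s3 : ∑ m ∈ Finset.Ico (k+C) (k+2*C), G m
        = C * (1 - (if f h ρ.2 then (1:ℝ) else 0)) := by
      have hcon : ∀ m ∈ Finset.Ico (k+C) (k+2*C), G m
          = 1 - (if f h ρ.2 then (1:ℝ) else 0) := by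
        intro m hm
        rw [Finset.mem_Ico] at hm
        simp only [hG]
        rw [dif_neg (by omega : ¬ m < k), if_neg (by omega : ¬ m < k + C)]
      rw [Finset.sum_congr rfl hcon, Finset.sum_const, Nat.card_Ico,
        (by omega : k + 2*C - (k+C) = C), nsmul_eq_mul]
    rw [e1, hsplit, s1, s2, s3]
  have lag : ∀ σ : H → ℝ, (∑ h, σ h = 1) →
      lagLoss f C ρ σ xb yb = (∑ h, σ h * E h) - C := by
    intro σ hσ
    have h2 : ∀ h : H, σ h * E h
        = σ h * (∑ i : Fin k, (if f h (xb i) = yb i then (0:ℝ) else 1))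
          + C * (σ h * (if f h ρ.1 then (1:ℝ) else 0))
          - C * (σ h * (if f h ρ.2 then (1:ℝ) else 0)) + C * σ h := by
      intro h; rw [errSum h]; ring
    have sE : ∑ h, σ h * E h
        = (∑ h, σ h * ∑ i : Fin k, (if f h (xb i) = yb i then (0:ℝ) else 1))
          + C * (∑ h, σ h * (if f h ρ.1 then (1:ℝ) else 0))
          - C * (∑ h, σ h * (if f h ρ.2 then (1:ℝ) else 0)) + C * (∑ h, σ h) := by
      rw [Finset.sum_congr rfl fun h _ => h2 h]
      rw [Finset.sum_add_distrib, Finset.sum_sub_distrib, Finset.sum_add_distrib,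
        ← Finset.mul_sum, ← Finset.mul_sum, ← Finset.mul_sum]
    have herr : errLoss f σ xb yb
        = ∑ h, σ h * ∑ i : Fin k, (if f h (xb i) = yb i then (0:ℝ) else 1) := by
      rw [errLoss, Finset.sum_comm]
      exact Finset.sum_congr rfl fun h _ => (Finset.mul_sum _ _ _).symm
    rw [lagLoss, herr, polVal, polVal, sE, hσ]
    ring
  have elin : ∀ σ : H → ℝ, (∑ h, σ h = 1) →
      expLin f C xb yb ρ σ = c + (1/2) * ∑ h, σ h * E h := by
    intro σ hσ
    rw [expLin, Finset.sum_congr rfl fun h _ => by rw [key h]]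
    have : ∀ h : H, σ h * (c + 1/2 * E h) = σ h * c + 1/2 * (σ h * E h) := by
      intro h; ring
    rw [Finset.sum_congr rfl fun h _ => this h, Finset.sum_add_distrib,
      ← Finset.sum_mul, ← Finset.mul_sum, hσ, one_mul]
  rw [lag π hπ1, lag π' hπ'1, elin π hπ1, elin π' hπ'1]
  ring
end

section
/- Let T ≥ 1, k ≥ 1, C ≥ 1, and for t = 1,…,T let π^t be a policy over H, x̄^t ∈ X^k, ȳ^t ∈ {0,1}^k, ρ^t ∈ X², and let ℓ^t ∈ [0,1]^{2k+4C} and a^h (h ∈ H) be the loss and action vectors of the reduction with parameters (x̄^t, ȳ^t, ρ^t, C). Then for every nonempty set V of policies over H: Σ_{t=1}^T L_{C,ρ^t}(π^t, x̄^t, ȳ^t) − inf_{π* ∈ V} Σ_{t=1}^T L_{C,ρ^t}(π*, x̄^t, ȳ^t) ≤ 2·( Σ_{t=1}^T E_{h∼π^t}⟨a^h, ℓ^t⟩ − min_{h* ∈ H} Σ_{t=1}^T ⟨a^{h*}, ℓ^t⟩ ). In particular, if the right-hand semi-bandit regret satisfies Σ_{t=1}^T E_{h∼π^t}⟨a^h,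 ℓ^t⟩ − min_{h*∈H} Σ_{t=1}^T ⟨a^{h*}, ℓ^t⟩ ≤ (2k+4C)·R, then the Lagrangian regret against V is at most 2(2k+4C)·R. -/
open Finset

variable {X H : Type*}

/-- Per-hypothesis Lagrangian loss. -/
noncomputable def hypL (f : H → X → Bool) (C : ℕ) (ρ : X × X) {k : ℕ}
    (xb : Fin k → X) (yb : Fin k → Bool) (h : H) : ℝ :=
  (∑ i, if f h (xb i) = yb i then (0:ℝ) else 1)
    + C * ((if f h ρ.1 then (1:ℝ) else 0) - (if f h ρ.2 then (1:ℝ) else 0))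

/-- Constant (hypothesis-independent) part of the reduction loss. -/
noncomputable def Kc (C : ℕ) {k : ℕ} (yb : Fin k → Bool) : ℝ :=
  (∑ i, (1 - if yb i then (1:ℝ) else 0)) / 2 + C

lemma lag_lin [Fintype H] (f : H → X → Bool) (C : ℕ) (ρ : X × X) {k : ℕ}
    (xb : Fin k → X) (yb : Fin k → Bool) (q : H → ℝ) :
    lagLoss f C ρ q xb yb = ∑ h, q h * hypL f C ρ xb yb h := by
  unfold lagLoss errLoss polVal hypL
  rw [Finset.sum_comm]
  rw [← Finset.sum_sub_distrib, Finset.mul_sum, ← Finset.sum_add_distrib]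
  refine Finset.sum_congr rfl fun h _ => ?_
  rw [mul_add, Finset.mul_sum]
  ring

lemma dot_eq (f : H → X → Bool) (C : ℕ) {k : ℕ}
    (xb : Fin k → X) (yb : Fin k → Bool) (ρ : X × X) (h : H) :
    ∑ j, actVec f C xb ρ h j * lossVec C yb j
      = hypL f C ρ xb yb h / 2 + Kc C yb := by
  classical
  set q : ℕ → ℝ := fun n =>
    if hn : n < k then
      ((if f h (xb ⟨n, hn⟩) = yb ⟨n, hn⟩ then (0:ℝ) else 1)
        + (1 - if yb ⟨n, hn⟩ then (1:ℝ) else 0)) / 2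
    else if n < k + C then (1 + (if f h ρ.1 then (1:ℝ) else 0)) / 2
    else (1 - (if f h ρ.2 then (1:ℝ) else 0)) / 2 with hq
  rw [Fintype.sum_sum_type]
  simp only [actVec, lossVec, Sum.elim_inl, Sum.elim_inr]
  rw [← Finset.sum_add_distrib]
  have key : ∀ i : Fin (k + 2*C),
      (if f h (augX C xb ρ i) then (1:ℝ) else 0) *
          (1 - (if augY C yb i then (1:ℝ) else 0))
        + (1 - (if f h (augX C xb ρ i) then (1:ℝ) else 0)) * (1/2)
      = q i.val := by
    intro i
    unfold augX augY
    by_cases h1 : (i : ℕ) < k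
    · simp only [hq, h1, dif_pos]
      cases hf : f h (xb ⟨i, h1⟩) <;> cases hy : yb ⟨i, h1⟩ <;> norm_num
    · by_cases h2 : (i : ℕ) < k + C
      · simp only [hq, h1, dif_neg, not_false_iff, h2, if_pos, if_true]
        cases hf : f h ρ.1 <;> norm_num
      · simp only [hq, h1, dif_neg, not_false_iff, h2, if_neg]
        cases hf : f h ρ.2 <;> norm_num
  rw [Finset.sum_congr rfl fun i _ => key i]
  have : ∑ i : Fin (k + 2*C), q i.val = ∑ n ∈ Finset.range (k + 2*C), q n :=
    Fin.sum_univ_eq_sum_range q (k + 2*C)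
  rw [this]
  have hsplit : k + 2*C = k + C + C := by omega
  rw [hsplit, Finset.range_eq_Ico,
    ← Finset.sum_Ico_consecutive q (Nat.zero_le (k+C)) (Nat.le_add_right (k+C) C),
    ← Finset.sum_Ico_consecutive q (Nat.zero_le k) (Nat.le_add_right k C)]
  have e1 : ∑ n ∈ Finset.Ico 0 k, q n
      = ∑ i : Fin k, ((if f h (xb i) = yb i then (0:ℝ) else 1)
          + (1 - if yb i then (1:ℝ) else 0)) / 2 := by
    rw [← Finset.range_eq_Ico, ← Fin.sum_univ_eq_sum_range q k]
    refine Finset.sum_congr rfl fun i _ => ?_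
    simp [hq, i.isLt]
  have e2 : ∑ n ∈ Finset.Ico k (k+C), q n
      = C * ((1 + (if f h ρ.1 then (1:ℝ) else 0)) / 2) := by
    have hc : ∀ n ∈ Finset.Ico k (k+C),
        q n = (1 + (if f h ρ.1 then (1:ℝ) else 0)) / 2 := by
      intro n hn
      rw [Finset.mem_Ico] at hn
      simp [hq, Nat.not_lt.mpr hn.1, hn.2]
    rw [Finset.sum_congr rfl hc, Finset.sum_const, Nat.card_Ico]
    simp [nsmul_eq_mul]
  have e3 : ∑ n ∈ Finset.Ico (k+C) (k+C+C), q n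
      = C * ((1 - (if f h ρ.2 then (1:ℝ) else 0)) / 2) := by
    have hc : ∀ n ∈ Finset.Ico (k+C) (k+C+C),
        q n = (1 - (if f h ρ.2 then (1:ℝ) else 0)) / 2 := by
      intro n hn
      rw [Finset.mem_Ico] at hn
      have h1 : ¬ n < k := by omega
      have h2 : ¬ n < k + C := by omega
      simp [hq, h1, h2]
    rw [Finset.sum_congr rfl hc, Finset.sum_const, Nat.card_Ico]
    have : k + C + C - (k + C) = C := by omega
    rw [this]
    simp [nsmul_eq_mul]
  rw [e1, e2, e3]
  unfold hypL Kc
  rw [← Finset.sum_div, Finset.sum_add_distrib]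
  ring

lemma expLin_eq [Fintype H] (f : H → X → Bool) (C : ℕ) {k : ℕ}
    (xb : Fin k → X) (yb : Fin k → Bool) (ρ : X × X) (q : H → ℝ)
    (hq : ∑ h, q h = 1) :
    expLin f C xb yb ρ q = lagLoss f C ρ q xb yb / 2 + Kc C yb := by
  unfold expLin
  rw [Finset.sum_congr rfl fun h _ => by rw [dot_eq f C xb yb ρ h]]
  rw [lag_lin f C ρ xb yb q, Finset.sum_div]
  have hK : (Kc C yb : ℝ) = ∑ h, q h * Kc C yb := by
    rw [← Finset.sum_mul, hq, one_mul]
  conv_rhs => rw [hK]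
  rw [← Finset.sum_add_distrib]
  refine Finset.sum_congr rfl fun h _ => ?_
  ring

/-- Theorem 3.1 of the paper: the Lagrangian regret against any nonempty
comparator set `V` of policies is bounded by twice the semi-bandit regret of the reduction;
in particular a semi-bandit regret bound `(2k+4C)·R` yields a Lagrangian regret bound
`2(2k+4C)·R`. -/
theorem statement3 [Fintype H] [Nonempty H] (f : H → X → Bool) {T k C : ℕ}
    (hT : 1 ≤ T) (hk : 1 ≤ k) (hC : 1 ≤ C)
    (π : Fin T → H → ℝ) (hπ0 : ∀ t h, 0 ≤ π t h) (hπ1 : ∀ t, ∑ h, π t h = 1)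
    (xb : Fin T → Fin k → X) (yb : Fin T → Fin k → Bool) (ρ : Fin T → X × X)
    (V : Set (H → ℝ)) (hV : V.Nonempty)
    (hVpol : ∀ q ∈ V, (∀ h, 0 ≤ q h) ∧ ∑ h, q h = 1) :
    ((∑ t, lagLoss f C (ρ t) (π t) (xb t) (yb t)) -
        sInf ((fun q => ∑ t, lagLoss f C (ρ t) q (xb t) (yb t)) '' V) ≤
      2 * ((∑ t, expLin f C (xb t) (yb t) (ρ t) (π t)) -
        Finset.univ.inf' Finset.univ_nonempty
          (fun hstar => ∑ t, ∑ j, actVec f C (xb t) (ρ t) hstar j * lossVec C (yb t) j)))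
    ∧ ∀ R : ℝ,
        (∑ t, expLin f C (xb t) (yb t) (ρ t) (π t)) -
          Finset.univ.inf' Finset.univ_nonempty
            (fun hstar => ∑ t, ∑ j, actVec f C (xb t) (ρ t) hstar j * lossVec C (yb t) j) ≤
          (2 * (k : ℝ) + 4 * C) * R →
        (∑ t, lagLoss f C (ρ t) (π t) (xb t) (yb t)) -
          sInf ((fun q => ∑ t, lagLoss f C (ρ t) q (xb t) (yb t)) '' V) ≤
          2 * (2 * (k : ℝ) + 4 * C) * R := by
  classical
  set F : H → ℝ := fun hstar =>
    ∑ t, ∑ j, actVec f C (xb t) (ρ t) hstar j * lossVec C (yb t) j with hFdef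
  have hF : ∀ h1 : H, F h1
      = (∑ t, hypL f C (ρ t) (xb t) (yb t) h1) / 2 + ∑ t, Kc C (yb t) := by
    intro h1
    rw [hFdef]
    rw [Finset.sum_div, ← Finset.sum_add_distrib]
    exact Finset.sum_congr rfl fun t _ => dot_eq f C (xb t) (yb t) (ρ t) h1
  have hE : ∑ t, expLin f C (xb t) (yb t) (ρ t) (π t)
      = (∑ t, lagLoss f C (ρ t) (π t) (xb t) (yb t)) / 2 + ∑ t, Kc C (yb t) := by
    rw [Finset.sum_div, ← Finset.sum_add_distrib]
    exact Finset.sum_congr rfl fun t _ =>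
      expLin_eq f C (xb t) (yb t) (ρ t) (π t) (hπ1 t)
  obtain ⟨h0, _, hM⟩ := Finset.exists_mem_eq_inf' (Finset.univ_nonempty (α := H)) F
  have hm : ∀ h1 : H, (∑ t, hypL f C (ρ t) (xb t) (yb t) h0)
      ≤ ∑ t, hypL f C (ρ t) (xb t) (yb t) h1 := by
    intro h1
    have h2 : F h0 ≤ F h1 := hM ▸ Finset.inf'_le F (Finset.mem_univ h1)
    rw [hF h0, hF h1] at h2
    linarith
  have hsinf : (∑ t, hypL f C (ρ t) (xb t) (yb t) h0)
      ≤ sInf ((fun q => ∑ t, lagLoss f C (ρ t) q (xb t) (yb t)) '' V) := by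
    apply le_csInf (hV.image _)
    rintro b ⟨q, hqV, rfl⟩
    obtain ⟨hq0, hq1⟩ := hVpol q hqV
    have hlin : ∑ t, lagLoss f C (ρ t) q (xb t) (yb t)
        = ∑ h, q h * ∑ t, hypL f C (ρ t) (xb t) (yb t) h := by
      rw [Finset.sum_congr rfl fun t _ => lag_lin f C (ρ t) (xb t) (yb t) q,
        Finset.sum_comm]
      exact Finset.sum_congr rfl fun h _ => by rw [Finset.mul_sum]
    simp only
    rw [hlin]
    calc ∑ t, hypL f C (ρ t) (xb t) (yb t) h0
        = ∑ h, q h * ∑ t, hypL f C (ρ t) (xb t) (yb t) h0 := by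
          rw [← Finset.sum_mul, hq1, one_mul]
      _ ≤ ∑ h, q h * ∑ t, hypL f C (ρ t) (xb t) (yb t) h :=
          Finset.sum_le_sum fun h _ =>
            mul_le_mul_of_nonneg_left (hm h) (hq0 h)
  have key : (∑ t, lagLoss f C (ρ t) (π t) (xb t) (yb t)) -
        sInf ((fun q => ∑ t, lagLoss f C (ρ t) q (xb t) (yb t)) '' V) ≤
      2 * ((∑ t, expLin f C (xb t) (yb t) (ρ t) (π t)) -
        Finset.univ.inf' Finset.univ_nonempty F) := by
    rw [hM, hE, hF h0]
    linarith
  refine ⟨key, fun R hR => ?_⟩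
  have h2 : (∑ t, expLin f C (xb t) (yb t) (ρ t) (π t)) -
      Finset.univ.inf' Finset.univ_nonempty F ≤ (2 * (k : ℝ) + 4 * C) * R := hR
  calc (∑ t, lagLoss f C (ρ t) (π t) (xb t) (yb t)) -
        sInf ((fun q => ∑ t, lagLoss f C (ρ t) q (xb t) (yb t)) '' V)
      ≤ 2 * ((∑ t, expLin f C (xb t) (yb t) (ρ t) (π t)) -
          Finset.univ.inf' Finset.univ_nonempty F) := key
    _ ≤ 2 * ((2 * (k : ℝ) + 4 * C) * R) := by linarith
    _ = 2 * (2 * (k : ℝ) + 4 * C) * R := by ring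
end

section
/- Let T ≥ 1, k ≥ 1, C ≥ 1, α ≥ 0, 0 ≤ ε ≤ α, γ ∈ (0,1], m ≥ 1. For each t = 1,…,T let π^t be a policy over H, x̄^t ∈ X^k, ȳ^t ∈ {0,1}^k, let d^{t,1},…,d^{t,m} : X×X → [0,1] be the round-t panel distances, and let ρ^t = (ρ^{t,1}, ρ^{t,2}) ∈ X² and u^t ∈ {0,1} satisfy: either u^t = 0 and ρ^{t,1} = ρ^{t,2} (the panel reports no violation), or u^t = 1 and ρ^t = (x̄^{t,s}, x̄^{t,l}) for some s ≠ l such that π^t has an (α,γ)-violation on (x̄^{t,s}, x̄^{t,l}) with respect to d^{t,1},…,d^{t,m}. Then for every policy π* such that for all t and all s ≠ l, π* has no (α−ε,γ)-violation on (x̄^{t,s}, x̄^{t,l}) with respect to d^{t,1},…,d^{t,m}: C·ε·Σ_{t=1}^T u^t + Σ_{t=1}^T Error(π^t, x̄^t, ȳ^t) − Σ_{t=1}^T Error(π*, x̄^t, ȳ^t) ≤ Σ_{t=1}^T L_{C,ρ^t}(π^t, x̄^t, ȳ^t) − Σ_{t=1}^T L_{C,ρ^t}(π*, x̄^t, ȳ^t).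 -/
open Finset

variable {X H : Type*}

open Classical in
/-- The number of panel members `i` reporting an `α`-violation of `π` on `(a,b)`,
i.e. with `π(a) − π(b) > d^i(a,b) + α`. -/
noncomputable def violCount [Fintype H] (f : H → X → Bool) {m : ℕ}
    (d : Fin m → X → X → ℝ) (α : ℝ) (π : H → ℝ) (a b : X) : ℕ :=
  (univ.filter fun i => d i a b + α < polVal f π a - polVal f π b).card

/-- `π` has an `(α,γ)`-violation on `(a,b)` with respect to the panel `d^1,…,d^m`. -/
def PanelViol [Fintype H] (f : H → X → Bool) {m : ℕ}
    (d : Fin m → X → X → ℝ) (α γ : ℝ) (π : H → ℝ) (a b : X) : Prop :=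
  γ ≤ (violCount f d α π a b : ℝ) / m

lemma key_gap [Fintype H] (f : H → X → Bool) {m : ℕ} (hm : 1 ≤ m)
    (d : Fin m → X → X → ℝ) (α γ ε : ℝ) (hγ0 : 0 < γ)
    (π πs : H → ℝ) (a b : X)
    (hv : PanelViol f d α γ π a b) (hnv : ¬ PanelViol f d (α - ε) γ πs a b) :
    ε ≤ (polVal f π a - polVal f π b) - (polVal f πs a - polVal f πs b) := by
  classical
  have hm0 : (0:ℝ) < m := by exact_mod_cast hm
  have hA : γ * m ≤ (violCount f d α π a b : ℝ) := by
    have := hv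
    rw [PanelViol, le_div_iff₀ hm0] at this
    exact this
  have hB : (violCount f d (α - ε) πs a b : ℝ) < γ * m := by
    rw [PanelViol, not_le, div_lt_iff₀ hm0] at hnv
    exact hnv
  have hcard : violCount f d (α - ε) πs a b < violCount f d α π a b := by
    exact_mod_cast lt_of_lt_of_le hB hA
  rw [violCount, violCount] at hcard
  have hnsub : ¬ (univ.filter fun i => d i a b + α < polVal f π a - polVal f π b) ⊆
      (univ.filter fun i => d i a b + (α - ε) < polVal f πs a - polVal f πs b) := by
    intro hsub
    exact absurd (Finset.card_le_card hsub) (not_le.mpr hcard)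
  obtain ⟨i, hiA, hiB⟩ := Finset.not_subset.mp hnsub
  simp only [Finset.mem_filter, Finset.mem_univ, true_and, not_lt] at hiA hiB
  linarith

/-- Lemma 4.4 of the paper: under the panel-reporting conditions, for any
policy `π*` that is `(α−ε,γ)`-fair on every pair of every round,
`C·ε·Σ_t u^t + error regret ≤ Lagrangian regret` against `π*`. -/
theorem statement6 [Fintype H] (f : H → X → Bool) {T k C m : ℕ}
    (hT : 1 ≤ T) (hk : 1 ≤ k) (hC : 1 ≤ C) (hm : 1 ≤ m)
    (α γ ε : ℝ) (hα : 0 ≤ α) (hε0 : 0 ≤ ε) (hεα : ε ≤ α) (hγ0 : 0 < γ) (hγ1 : γ ≤ 1)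
    (π : Fin T → H → ℝ) (hπ0 : ∀ t h, 0 ≤ π t h) (hπ1 : ∀ t, ∑ h, π t h = 1)
    (xb : Fin T → Fin k → X) (yb : Fin T → Fin k → Bool)
    (d : Fin T → Fin m → X → X → ℝ) (hd : ∀ t i a b, 0 ≤ d t i a b ∧ d t i a b ≤ 1)
    (ρ : Fin T → X × X) (u : Fin T → Bool)
    (hpanel : ∀ t, (u t = false ∧ (ρ t).1 = (ρ t).2) ∨
      (u t = true ∧ ∃ s l : Fin k, s ≠ l ∧ ρ t = (xb t s, xb t l) ∧
        PanelViol f (d t) α γ (π t) (xb t s) (xb t l)))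
    (πs : H → ℝ) (hπs0 : ∀ h, 0 ≤ πs h) (hπs1 : ∑ h, πs h = 1)
    (hfair : ∀ t, ∀ s l : Fin k, s ≠ l →
      ¬ PanelViol f (d t) (α - ε) γ πs (xb t s) (xb t l)) :
    (C : ℝ) * ε * (∑ t, if u t then (1:ℝ) else 0) +
        (∑ t, errLoss f (π t) (xb t) (yb t)) - (∑ t, errLoss f πs (xb t) (yb t)) ≤
      (∑ t, lagLoss f C (ρ t) (π t) (xb t) (yb t)) -
        (∑ t, lagLoss f C (ρ t) πs (xb t) (yb t))  := by
  classical
  have key : ∀ t : Fin T, ε * (if u t then (1:ℝ) else 0) ≤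
      (polVal f (π t) (ρ t).1 - polVal f (π t) (ρ t).2) -
      (polVal f πs (ρ t).1 - polVal f πs (ρ t).2) := by
    intro t
    rcases hpanel t with ⟨hu, heq⟩ | ⟨hu, s, l, hsl, hρ, hviol⟩
    · simp [hu, heq]
    · simp only [hu, if_true, mul_one, hρ]
      exact key_gap f hm (d t) α γ ε hγ0 (π t) πs (xb t s) (xb t l) hviol
        (hfair t s l hsl)
  have hsum : ε * (∑ t, if u t then (1:ℝ) else 0) ≤
      ∑ t, ((polVal f (π t) (ρ t).1 - polVal f (π t) (ρ t).2) -
        (polVal f πs (ρ t).1 - polVal f πs (ρ t).2)) := by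
    rw [Finset.mul_sum]
    exact Finset.sum_le_sum fun t _ => key t
  have hC0 : (0:ℝ) ≤ C := Nat.cast_nonneg C
  have hmul := mul_le_mul_of_nonneg_left hsum hC0
  simp only [lagLoss, Finset.sum_add_distrib, ← Finset.mul_sum, Finset.sum_sub_distrib] at *
  nlinarith [hmul]
end

section
/- Under the same setting and hypotheses relating (π^t, x̄^t, ȳ^t, ρ^t, u^t, d^{t,·}) for t = 1,…,T (the panel-reporting conditions), suppose π* is a policy having no (α−ε,γ)-violation on any pair (x̄^{t,s}, x̄^{t,l}), s ≠ l, for every t, and suppose the Lagrangian regret against π* is bounded: Σ_{t=1}^T L_{C,ρ^t}(π^t, x̄^t, ȳ^t) − Σ_{t=1}^T L_{C,ρ^t}(π*, x̄^t, ȳ^t) ≤ B for some real B ≥ 0. Then simultaneously: (i) Σ_{t=1}^T Error(π^t, x̄^t, ȳ^t) − Σ_{t=1}^T Error(π*, x̄^t, ȳ^t) ≤ B (accuracy regret bound), and (ii) C·ε·Σ_{t=1}^T u^t ≤ B + k·T (bound on the number of rounds with a reported (α,γ)-fairness violation), provided ε > 0. -/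
open Finset

variable {X H : Type*}

/-- under the panel-reporting conditions, if the Lagrangian regret against an
`(α−ε,γ)`-fair policy `π*` is at most `B ≥ 0`, then simultaneously (i) the error regret
against `π*` is at most `B`, and (ii) if `ε > 0`, `C·ε·Σ_t u^t ≤ B + k·T`. -/
theorem statement7 [Fintype H] (f : H → X → Bool) {T k C m : ℕ}
    (hT : 1 ≤ T) (hk : 1 ≤ k) (hC : 1 ≤ C) (hm : 1 ≤ m)
    (α γ ε : ℝ) (hα : 0 ≤ α) (hε0 : 0 ≤ ε) (hεα : ε ≤ α) (hγ0 : 0 < γ) (hγ1 : γ ≤ 1)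
    (π : Fin T → H → ℝ) (hπ0 : ∀ t h, 0 ≤ π t h) (hπ1 : ∀ t, ∑ h, π t h = 1)
    (xb : Fin T → Fin k → X) (yb : Fin T → Fin k → Bool)
    (d : Fin T → Fin m → X → X → ℝ) (hd : ∀ t i a b, 0 ≤ d t i a b ∧ d t i a b ≤ 1)
    (ρ : Fin T → X × X) (u : Fin T → Bool)
    (hpanel : ∀ t, (u t = false ∧ (ρ t).1 = (ρ t).2) ∨
      (u t = true ∧ ∃ s l : Fin k, s ≠ l ∧ ρ t = (xb t s, xb t l) ∧
        PanelViol f (d t) α γ (π t) (xb t s) (xb t l)))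
    (πs : H → ℝ) (hπs0 : ∀ h, 0 ≤ πs h) (hπs1 : ∑ h, πs h = 1)
    (hfair : ∀ t, ∀ s l : Fin k, s ≠ l →
      ¬ PanelViol f (d t) (α - ε) γ πs (xb t s) (xb t l))
    (B : ℝ) (hB0 : 0 ≤ B)
    (hB : (∑ t, lagLoss f C (ρ t) (π t) (xb t) (yb t)) -
        (∑ t, lagLoss f C (ρ t) πs (xb t) (yb t)) ≤ B) :
    ((∑ t, errLoss f (π t) (xb t) (yb t)) - (∑ t, errLoss f πs (xb t) (yb t)) ≤ B)
    ∧ (0 < ε →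
        (C : ℝ) * ε * (∑ t, if u t then (1:ℝ) else 0) ≤ B + (k : ℝ) * T) := by
  classical
  -- per-round key inequality
  have key : ∀ t, (C:ℝ) * ε * (if u t then 1 else 0) ≤
      (C:ℝ) * ((polVal f (π t) (ρ t).1 - polVal f (π t) (ρ t).2)
        - (polVal f πs (ρ t).1 - polVal f πs (ρ t).2)) := by
    intro t
    rcases hpanel t with ⟨hu, heq⟩ | ⟨hu, s, l, hsl, hρ, hviol⟩
    · simp [hu, heq]
    · have hnv := hfair t s l hsl
      set a := xb t s with ha
      set b := xb t l with hb
      have hm0 : (0:ℝ) < m := by exact_mod_cast hm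
      have h1 : γ * m ≤ (violCount f (d t) α (π t) a b : ℝ) := by
        have := hviol
        rw [PanelViol, le_div_iff₀ hm0] at this
        exact this
      have h2 : (violCount f (d t) (α - ε) πs a b : ℝ) < γ * m := by
        rw [PanelViol, le_div_iff₀ hm0, not_le] at hnv
        exact hnv
      have hex : ∃ i : Fin m, d t i a b + α < polVal f (π t) a - polVal f (π t) b ∧
          ¬ (d t i a b + (α - ε) < polVal f πs a - polVal f πs b) := by
        by_contra hcon
        push_neg at hcon
        have hsub : (univ.filter fun i => d t i a b + α <
              polVal f (π t) a - polVal f (π t) b) ⊆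
            (univ.filter fun i => d t i a b + (α - ε) <
              polVal f πs a - polVal f πs b) := by
          intro i hi
          simp only [mem_filter, mem_univ, true_and] at hi ⊢
          exact hcon i hi
        have hle := Finset.card_le_card hsub
        have : (violCount f (d t) α (π t) a b : ℝ) ≤
            (violCount f (d t) (α - ε) πs a b : ℝ) := by
          unfold violCount; exact_mod_cast hle
        linarith
      obtain ⟨i, hi1, hi2⟩ := hex
      rw [not_lt] at hi2
      have hΔ : ε ≤ (polVal f (π t) a - polVal f (π t) b) -
          (polVal f πs a - polVal f πs b) := by linarith
      have hC0 : (0:ℝ) ≤ C := by positivity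
      have : (C:ℝ) * ε ≤ (C:ℝ) * ((polVal f (π t) a - polVal f (π t) b) -
          (polVal f πs a - polVal f πs b)) := mul_le_mul_of_nonneg_left hΔ hC0
      simp only [hu, if_pos, mul_one, hρ]
      simpa using this
  have hsum : ∑ t, (C:ℝ) * ε * (if u t then 1 else 0) ≤
      ∑ t, (C:ℝ) * ((polVal f (π t) (ρ t).1 - polVal f (π t) (ρ t).2)
        - (polVal f πs (ρ t).1 - polVal f πs (ρ t).2)) :=
    Finset.sum_le_sum fun t _ => key t
  have hsum0 : 0 ≤ ∑ t, (C:ℝ) * ε * (if u t then 1 else 0) := by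
    apply Finset.sum_nonneg
    intro t _
    have : (0:ℝ) ≤ (if u t then (1:ℝ) else 0) := by positivity
    have hC0 : (0:ℝ) ≤ C := by positivity
    exact mul_nonneg (mul_nonneg hC0 hε0) this
  -- rewrite lagrangian sums
  have hlag : (∑ t, errLoss f (π t) (xb t) (yb t)) - (∑ t, errLoss f πs (xb t) (yb t))
      + ∑ t, (C:ℝ) * ((polVal f (π t) (ρ t).1 - polVal f (π t) (ρ t).2)
        - (polVal f πs (ρ t).1 - polVal f πs (ρ t).2)) ≤ B := by
    have : (∑ t, lagLoss f C (ρ t) (π t) (xb t) (yb t)) -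
        (∑ t, lagLoss f C (ρ t) πs (xb t) (yb t)) =
        (∑ t, errLoss f (π t) (xb t) (yb t)) - (∑ t, errLoss f πs (xb t) (yb t))
      + ∑ t, (C:ℝ) * ((polVal f (π t) (ρ t).1 - polVal f (π t) (ρ t).2)
        - (polVal f πs (ρ t).1 - polVal f πs (ρ t).2)) := by
      simp only [lagLoss, Finset.sum_add_distrib, mul_sub, Finset.sum_sub_distrib]
      ring
    linarith [hB, this.symm.le, this.le]
  -- error bounds
  have hEπ0 : 0 ≤ ∑ t, errLoss f (π t) (xb t) (yb t) := by
    apply Finset.sum_nonneg; intro t _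
    apply Finset.sum_nonneg; intro i _
    apply Finset.sum_nonneg; intro h _
    have := hπ0 t h
    positivity
  have hEs : ∑ t, errLoss f πs (xb t) (yb t) ≤ (k : ℝ) * T := by
    have hbound : ∀ t : Fin T, errLoss f πs (xb t) (yb t) ≤ (k : ℝ) := by
      intro t
      unfold errLoss
      calc ∑ i, ∑ h, πs h * (if f h (xb t i) = yb t i then 0 else 1)
          ≤ ∑ i : Fin k, (1:ℝ) := by
            apply Finset.sum_le_sum; intro i _
            calc ∑ h, πs h * (if f h (xb t i) = yb t i then 0 else 1)
                ≤ ∑ h, πs h := by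
                  apply Finset.sum_le_sum; intro h _
                  have h0 := hπs0 h
                  split <;> nlinarith
              _ = 1 := hπs1
        _ = (k : ℝ) := by simp
    calc ∑ t, errLoss f πs (xb t) (yb t) ≤ ∑ _t : Fin T, (k : ℝ) :=
          Finset.sum_le_sum fun t _ => hbound t
      _ = (k : ℝ) * T := by simp [mul_comm]
  constructor
  · linarith
  · intro hε
    have : (C:ℝ) * ε * (∑ t, if u t then (1:ℝ) else 0) =
        ∑ t, (C:ℝ) * ε * (if u t then 1 else 0) := by
      rw [Finset.mul_sum]
    rw [this]
    linarith
end

section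
/- There exist a two-element set X = {x, x'}, a hypothesis class H = {h, h'} with h(x) = 1, h(x') = 0, h'(x) = 0, h'(x') = 1, a distance function d : X×X → [0,1] with d(x,x') = d(x',x) = 0.1, a level α = 0.2, and the uniform policy π on H (π selects h and h' each with probability 1/2), such that: (1) each of the two deterministic policies concentrated on h and on h' has an α-violation on some ordered pair from {x, x'} with respect to d, hence the expected unfairness loss of a hypothesis drawn from π on the pair (x, x') equals 1; and (2) π itself has no α-violation on (x, x') nor on (x', x) with respect to d, hence the unfairness loss of π equals 0. -/
open Finset

/-- `π(x) = Pr_{h∼π}[h(x) = 1]`, where the two-element context space and the two-element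
hypothesis class are both modelled by `Bool` and the hypothesis map is `f`
(the context `x` is `true`, the context `x'` is `false`). -/
noncomputable def pval (f : Bool → Bool → Bool) (π : Bool → ℝ) (x : Bool) : ℝ :=
  ∑ h, π h * (if f h x then 1 else 0)

/-- `π` has an `α`-violation on the ordered pair `(a,b)` with respect to `d`:
`π(a) − π(b) > d(a,b) + α`. -/
def Viol (f : Bool → Bool → Bool) (α : ℝ) (d : Bool → Bool → ℝ) (π : Bool → ℝ)
    (a b : Bool) : Prop :=
  d a b + α < pval f π a - pval f π b

open Classical in
/-- Unfairness loss of a policy on the instance `(x,x')` (single auditor, `m = 1`, `γ = 1`):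
the indicator that the policy has an `α`-violation on `(x,x')` or on `(x',x)` w.r.t. `d`. -/
noncomputable def unfairInd (f : Bool → Bool → Bool) (α : ℝ) (d : Bool → Bool → ℝ)
    (π : Bool → ℝ) (x x' : Bool) : ℝ :=
  if Viol f α d π x x' ∨ Viol f α d π x' x then 1 else 0

/-- The deterministic policy concentrated on the hypothesis `h0`. -/
noncomputable def detPol (h0 : Bool) : Bool → ℝ := fun h => if h = h0 then 1 else 0

/-- Lemma 4.7 of the paper: there is an instance (two contexts `x = true`,
`x' = false`, two hypotheses `h = true`, `h' = false` with `h(x)=1, h(x')=0, h'(x)=0, h'(x')=1`,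
distance `d(x,x') = d(x',x) = 0.1`, level `α = 0.2`, uniform policy `π`) on which every
realized hypothesis has an `α`-violation — so the expected unfairness loss of a hypothesis
drawn from `π` is `1` — while `π` itself has no `α`-violation, so its unfairness loss is `0`. -/
theorem statement8 :
    ∃ (f : Bool → Bool → Bool) (d : Bool → Bool → ℝ) (α : ℝ) (π : Bool → ℝ),
      f true true = true ∧ f true false = false ∧
      f false true = false ∧ f false false = true ∧
      (∀ a b, 0 ≤ d a b ∧ d a b ≤ 1) ∧ d true false = 0.1 ∧ d false true = 0.1 ∧
      α = 0.2 ∧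
      (∀ h, π h = 1/2) ∧ (∀ h, 0 ≤ π h) ∧ (∑ h, π h) = 1 ∧
      ((∃ a b, Viol f α d (detPol true) a b) ∧
        (∃ a b, Viol f α d (detPol false) a b) ∧
        (∑ h, π h * unfairInd f α d (detPol h) true false) = 1) ∧
      (¬ Viol f α d π true false ∧ ¬ Viol f α d π false true ∧
        unfairInd f α d π true false = 0) := by

  refine ⟨fun h x => h == x, fun _ _ => 0.1, 0.2, fun _ => 1/2,
    rfl, rfl, rfl, rfl, fun a b => by norm_num, rfl, rfl, rfl,
    fun _ => rfl, fun _ => by norm_num, by norm_num [Fintype.sum_bool], ?_, ?_⟩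
  · have v1 : Viol (fun h x => h == x) 0.2 (fun _ _ => 0.1) (detPol true) true false := by
      simp [Viol, pval, detPol, Fintype.sum_bool]; norm_num
    have v2 : Viol (fun h x => h == x) 0.2 (fun _ _ => 0.1) (detPol false) false true := by
      simp [Viol, pval, detPol, Fintype.sum_bool]; norm_num
    refine ⟨⟨true, false, v1⟩, ⟨false, true, v2⟩, ?_⟩
    rw [Fintype.sum_bool]
    rw [unfairInd, unfairInd, if_pos (Or.inl v1), if_pos (Or.inr v2)]
    norm_num
  · have nv : ∀ a b : Bool, ¬ Viol (fun h x => h == x) 0.2 (fun _ _ => 0.1) (fun _ => (1:ℝ)/2) a b := by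
      intro a b
      simp only [Viol, pval, Fintype.sum_bool]
      cases a <;> cases b <;> norm_num
    exact ⟨nv true false, nv false true, by rw [unfairInd, if_neg]; rintro (h|h) <;> [exact nv true false h; exact nv false true h]⟩
end
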